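/- arXiv:2305.10007 — 2 statements merged into one kernel-verified Lean document; each statement's English description precedes it below -/
import Mathlib

section
/- Let n ≥ 3 be an integer and κ > n a real number. Then there exists a constant C > 0, depending only on n and κ, such that for every R > 0 and every x ∈ ℝⁿ with x ≠ 0, one has ∫_{{y ∈ ℝⁿ : |y| ≥ R}} |x − y|^{2−n} |y|^{−κ} dy ≤ C (R^{n−κ} + |x|^{n−κ}) |x|^{2−n}. -/
/-!
Put `r = ‖x‖ / 2` and split `{y | R ≤ ‖y‖}` into three pieces. Where `‖y‖ < r` the kernel
`‖x - y‖ ^ p` (`p = 2 - n ≤ 0`) is at most `r ^ p`; where `‖x - y‖ < r ≤ ‖y‖` the weight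
`‖y‖ ^ (-κ)` is at most `r ^ (-κ)`; on the rest `‖x - y‖ ≥ ‖y‖ / 3`. Each piece is thus dominated
by the integral of a pure power `‖y‖ ^ q` over a ball or the complement of a ball. Haar measure
in dimension `d` scales by `r ^ d` under `y ↦ r • y`, so such an integral equals `r ^ (q + d)`
times the same integral at radius `1`, which is finite for `q > -d` on the ball and for `q < -d`
outside it.
-/

open MeasureTheory Metric Set Module
open scoped ENNReal Pointwise

theorem setLIntegral_ofReal_le_mul_setLIntegral {α : Type*} [MeasurableSpace α] (μ : Measure α)
    {f g : α → ℝ} {s t : Set α} {c : ℝ} (hs : MeasurableSet s) (hst : s ⊆ t) (hc : 0 ≤ c)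
    (hfg : ∀ y ∈ s, f y ≤ c * g y) :
    ∫⁻ y in s, ENNReal.ofReal (f y) ∂μ ≤ ENNReal.ofReal c * ∫⁻ y in t, ENNReal.ofReal (g y) ∂μ :=
  calc ∫⁻ y in s, ENNReal.ofReal (f y) ∂μ
      ≤ ∫⁻ y in s, ENNReal.ofReal c * ENNReal.ofReal (g y) ∂μ :=
        setLIntegral_mono' hs fun y hy ↦ by
          rw [← ENNReal.ofReal_mul hc]; exact ENNReal.ofReal_le_ofReal (hfg y hy)
    _ = ENNReal.ofReal c * ∫⁻ y in s, ENNReal.ofReal (g y) ∂μ :=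
        lintegral_const_mul' _ _ ENNReal.ofReal_ne_top
    _ ≤ ENNReal.ofReal c * ∫⁻ y in t, ENNReal.ofReal (g y) ∂μ := by
        gcongr

section

variable {E : Type*} [NormedAddCommGroup E]

theorem norm_sub_rpow_le_of_norm_div_two_le {x y : E} {p : ℝ} (hp : p ≤ 0) (hy : 0 < ‖y‖)
    (h : ‖x‖ / 2 ≤ ‖x - y‖) : ‖x - y‖ ^ p ≤ 3 ^ (-p) * ‖y‖ ^ p := by
  have h3 : ‖y‖ / 3 ≤ ‖x - y‖ := by
    have := norm_sub_norm_le y x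
    rw [norm_sub_rev y x] at this
    linarith
  calc ‖x - y‖ ^ p ≤ (‖y‖ / 3) ^ p := Real.rpow_le_rpow_of_nonpos (by positivity) h3 hp
    _ = 3 ^ (-p) * ‖y‖ ^ p := by
      rw [Real.div_rpow hy.le zero_le_three, Real.rpow_neg zero_le_three, div_eq_inv_mul]

variable [MeasurableSpace E] [BorelSpace E] (μ : Measure E)

theorem setLIntegral_norm_sub_rpow_mul_norm_rpow_le {x : E} (hx : x ≠ 0) (R : ℝ) {p κ : ℝ}
    (hp : p ≤ 0) (hκ : 0 ≤ κ) :
    ∫⁻ y in {y | R ≤ ‖y‖}, ENNReal.ofReal (‖x - y‖ ^ p * ‖y‖ ^ (-κ)) ∂μ ≤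
      ENNReal.ofReal ((‖x‖ / 2) ^ p) * ∫⁻ y in {y | R ≤ ‖y‖}, ENNReal.ofReal (‖y‖ ^ (-κ)) ∂μ +
      ENNReal.ofReal ((‖x‖ / 2) ^ (-κ)) *
        ∫⁻ y in (x - ·) ⁻¹' ball 0 (‖x‖ / 2), ENNReal.ofReal (‖x - y‖ ^ p) ∂μ +
      ENNReal.ofReal (3 ^ (-p)) *
        ∫⁻ y in {y | ‖x‖ / 2 ≤ ‖y‖}, ENNReal.ofReal (‖y‖ ^ (p - κ)) ∂μ := by
  set r := ‖x‖ / 2 with hr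
  have hr0 : 0 < r := by positivity
  set near : Set E := (x - ·) ⁻¹' ball 0 r
  have hnear : MeasurableSet near := measurableSet_ball.preimage (by fun_prop)
  have hfar : MeasurableSet {y : E | r ≤ ‖y‖} := measurableSet_le measurable_const measurable_norm
  have hcover : {y : E | R ≤ ‖y‖} ⊆
      ({y | R ≤ ‖y‖} ∩ ball 0 r ∪ {y | r ≤ ‖y‖} ∩ near) ∪ {y | r ≤ ‖y‖} \ near := by
    intro y hy
    by_cases hyr : ‖y‖ < r
    · exact Or.inl (Or.inl ⟨hy, mem_ball_zero_iff.2 hyr⟩)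
    · by_cases hyx : y ∈ near
      · exact Or.inl (Or.inr ⟨not_lt.1 hyr, hyx⟩)
      · exact Or.inr ⟨not_lt.1 hyr, hyx⟩
  have hsmall : ∀ y ∈ {y : E | R ≤ ‖y‖} ∩ ball 0 r,
      ‖x - y‖ ^ p * ‖y‖ ^ (-κ) ≤ r ^ p * ‖y‖ ^ (-κ) := by
    rintro y ⟨-, hy⟩
    rw [mem_ball_zero_iff] at hy
    refine mul_le_mul_of_nonneg_right (Real.rpow_le_rpow_of_nonpos hr0 ?_ hp) (by positivity)
    linarith [norm_sub_norm_le x y]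
  have hnear_le : ∀ y ∈ {y : E | r ≤ ‖y‖} ∩ near,
      ‖x - y‖ ^ p * ‖y‖ ^ (-κ) ≤ r ^ (-κ) * ‖x - y‖ ^ p := by
    rintro y ⟨hy, -⟩
    rw [mul_comm]
    exact mul_le_mul_of_nonneg_right (Real.rpow_le_rpow_of_nonpos hr0 hy (by linarith))
      (by positivity)
  have hfar_le : ∀ y ∈ {y : E | r ≤ ‖y‖} \ near,
      ‖x - y‖ ^ p * ‖y‖ ^ (-κ) ≤ 3 ^ (-p) * ‖y‖ ^ (p - κ) := by
    rintro y ⟨hy, hyx⟩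
    have hy0 : 0 < ‖y‖ := hr0.trans_le hy
    rw [sub_eq_add_neg p, Real.rpow_add hy0, ← mul_assoc]
    refine mul_le_mul_of_nonneg_right (norm_sub_rpow_le_of_norm_div_two_le hp hy0 ?_)
      (by positivity)
    simpa [near] using hyx
  calc ∫⁻ y in {y | R ≤ ‖y‖}, ENNReal.ofReal (‖x - y‖ ^ p * ‖y‖ ^ (-κ)) ∂μ
      ≤ ∫⁻ y in ({y | R ≤ ‖y‖} ∩ ball 0 r ∪ {y | r ≤ ‖y‖} ∩ near) ∪ {y | r ≤ ‖y‖} \ near,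
          ENNReal.ofReal (‖x - y‖ ^ p * ‖y‖ ^ (-κ)) ∂μ := lintegral_mono_set hcover
    _ ≤ _ := (lintegral_union_le _ _ _).trans (add_le_add_left (lintegral_union_le _ _ _) _)
    _ ≤ _ := by
      gcongr ?_ + ?_ + ?_
      · exact setLIntegral_ofReal_le_mul_setLIntegral μ
          ((measurableSet_le measurable_const measurable_norm).inter measurableSet_ball)
          inter_subset_left (by positivity) hsmall
      · exact setLIntegral_ofReal_le_mul_setLIntegral μ (hfar.inter hnear) inter_subset_right
          (by positivity) hnear_le
      · exact setLIntegral_ofReal_le_mul_setLIntegral μ (hfar.diff hnear) sdiff_subset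
          (by positivity) hfar_le

end

section

variable {E : Type*} [NormedAddCommGroup E] [NormedSpace ℝ E]

theorem smul_setOf_one_le_norm {r : ℝ} (hr : 0 < r) :
    r • {y : E | 1 ≤ ‖y‖} = {y | r ≤ ‖y‖} := by
  ext y
  rw [mem_smul_set_iff_inv_smul_mem₀ hr.ne', mem_ofPred_eq, mem_ofPred_eq, norm_smul,
    Real.norm_of_nonneg (inv_nonneg.2 hr.le), ← div_eq_inv_mul, one_le_div hr]

end

section

variable {E : Type*} [NormedAddCommGroup E] [NormedSpace ℝ E] [FiniteDimensional ℝ E]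
  [MeasurableSpace E] [BorelSpace E] (μ : Measure E) [μ.IsAddHaarMeasure]

theorem lintegral_eq_mul_lintegral_comp_smul (f : E → ℝ≥0∞) {r : ℝ} (hr : 0 < r) :
    ∫⁻ x, f x ∂μ = ENNReal.ofReal (r ^ finrank ℝ E) * ∫⁻ x, f (r • x) ∂μ := by
  have hmap : ∫⁻ x, f (r • x) ∂μ = ∫⁻ y, f y ∂(μ.map (r • ·)) :=
    ((MeasurableEquiv.smul₀ r hr.ne').measurableEmbedding.lintegral_map f).symm
  rw [hmap, Measure.map_addHaar_smul μ hr.ne', lintegral_smul_measure,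
    abs_of_pos (inv_pos.2 (pow_pos hr _)), smul_eq_mul, ← mul_assoc,
    ← ENNReal.ofReal_mul (by positivity), mul_inv_cancel₀ (by positivity), ENNReal.ofReal_one, one_mul]

theorem setLIntegral_smul_norm_rpow {s : Set E} (hs : MeasurableSet s) {r : ℝ} (hr : 0 < r)
    (q : ℝ) :
    ∫⁻ y in r • s, ENNReal.ofReal (‖y‖ ^ q) ∂μ =
      ENNReal.ofReal (r ^ (q + finrank ℝ E)) * ∫⁻ y in s, ENNReal.ofReal (‖y‖ ^ q) ∂μ := by
  have hscale : ∀ z, (r • s).indicator (fun y ↦ ENNReal.ofReal (‖y‖ ^ q)) (r • z) =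
      ENNReal.ofReal (r ^ q) * s.indicator (fun y ↦ ENNReal.ofReal (‖y‖ ^ q)) z := by
    intro z
    by_cases hz : z ∈ s
    · rw [indicator_of_mem (smul_mem_smul_set hz), indicator_of_mem hz, norm_smul,
        Real.norm_of_nonneg hr.le, Real.mul_rpow hr.le (norm_nonneg z),
        ENNReal.ofReal_mul (by positivity)]
    · rw [indicator_of_notMem ((smul_mem_smul_set_iff₀ hr.ne' _ _).not.2 hz),
        indicator_of_notMem hz, mul_zero]
  rw [← lintegral_indicator (hs.const_smul₀ r), lintegral_eq_mul_lintegral_comp_smul μ _ hr,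
    ← lintegral_indicator hs]
  simp_rw [hscale]
  rw [lintegral_const_mul' _ _ ENNReal.ofReal_ne_top, ← mul_assoc,
    ← ENNReal.ofReal_mul (by positivity), Real.rpow_add hr, Real.rpow_natCast, mul_comm (r ^ q)]

theorem setLIntegral_ball_norm_rpow_lt_top (hd : 1 ≤ finrank ℝ E) {q : ℝ}
    (hq : 0 < q + finrank ℝ E) :
    ∫⁻ y in ball 0 1, ENNReal.ofReal (‖y‖ ^ q) ∂μ < ∞ :=
  (integrableOn_ball_of_norm_le_rpow (C := 1) (α := -q) hd (by linarith)
    (.of_forall fun y ↦ by simp [abs_of_nonneg (Real.rpow_nonneg (norm_nonneg y) q)])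
    (measurable_norm.pow_const q).aestronglyMeasurable).setLIntegral_lt_top

theorem setLIntegral_one_le_norm_rpow_lt_top {q : ℝ} (hq : q + finrank ℝ E < 0) :
    ∫⁻ y in {y | 1 ≤ ‖y‖}, ENNReal.ofReal (‖y‖ ^ q) ∂μ < ∞ := by
  have hbound : ∀ y ∈ {y : E | 1 ≤ ‖y‖}, ENNReal.ofReal (‖y‖ ^ q) ≤
      ENNReal.ofReal (2 ^ (-q)) * ENNReal.ofReal ((1 + ‖y‖) ^ q) := by
    intro y hy
    have hq0 : q ≤ 0 := by linarith [(finrank ℝ E).cast_nonneg (α := ℝ)]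
    rw [← ENNReal.ofReal_mul (by positivity)]
    refine ENNReal.ofReal_le_ofReal ?_
    calc ‖y‖ ^ q ≤ ((1 + ‖y‖) / 2) ^ q :=
          Real.rpow_le_rpow_of_nonpos (by positivity) (by linarith [hy.out]) hq0
      _ = 2 ^ (-q) * (1 + ‖y‖) ^ q := by
        rw [Real.div_rpow (by positivity) zero_le_two, Real.rpow_neg zero_le_two, div_eq_inv_mul]
  calc ∫⁻ y in {y | 1 ≤ ‖y‖}, ENNReal.ofReal (‖y‖ ^ q) ∂μ
      ≤ ∫⁻ y in {y | 1 ≤ ‖y‖}, ENNReal.ofReal (2 ^ (-q)) * ENNReal.ofReal ((1 + ‖y‖) ^ q) ∂μ :=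
        setLIntegral_mono' (measurableSet_le measurable_const measurable_norm) hbound
    _ ≤ ENNReal.ofReal (2 ^ (-q)) * ∫⁻ y, ENNReal.ofReal ((1 + ‖y‖) ^ q) ∂μ := by
        rw [lintegral_const_mul' _ _ ENNReal.ofReal_ne_top]
        gcongr
        exact Measure.restrict_le_self
    _ < ∞ := by
        refine ENNReal.mul_lt_top ENNReal.ofReal_lt_top ?_
        simpa using (integrable_one_add_norm (μ := μ) (r := -q) (by linarith)).lintegral_lt_top

theorem exists_setLIntegral_ball_norm_rpow_eq (hd : 1 ≤ finrank ℝ E) {q : ℝ}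
    (hq : 0 < q + finrank ℝ E) :
    ∃ K ≥ 0, ∀ r > 0, ∫⁻ y in ball 0 r, ENNReal.ofReal (‖y‖ ^ q) ∂μ =
      ENNReal.ofReal (K * r ^ (q + finrank ℝ E)) := by
  refine ⟨(∫⁻ y in ball 0 1, ENNReal.ofReal (‖y‖ ^ q) ∂μ).toReal, ENNReal.toReal_nonneg,
    fun r hr ↦ ?_⟩
  rw [← smul_unitBall_of_pos hr, setLIntegral_smul_norm_rpow μ measurableSet_ball hr,
    ENNReal.ofReal_mul ENNReal.toReal_nonneg,
    ENNReal.ofReal_toReal (setLIntegral_ball_norm_rpow_lt_top μ hd hq).ne, mul_comm]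

theorem exists_setLIntegral_le_norm_rpow_eq {q : ℝ} (hq : q + finrank ℝ E < 0) :
    ∃ K ≥ 0, ∀ r > 0, ∫⁻ y in {y | r ≤ ‖y‖}, ENNReal.ofReal (‖y‖ ^ q) ∂μ =
      ENNReal.ofReal (K * r ^ (q + finrank ℝ E)) := by
  refine ⟨(∫⁻ y in {y | 1 ≤ ‖y‖}, ENNReal.ofReal (‖y‖ ^ q) ∂μ).toReal, ENNReal.toReal_nonneg,
    fun r hr ↦ ?_⟩
  rw [← smul_setOf_one_le_norm hr,
    setLIntegral_smul_norm_rpow μ (measurableSet_le measurable_const measurable_norm) hr,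
    ENNReal.ofReal_mul ENNReal.toReal_nonneg,
    ENNReal.ofReal_toReal (setLIntegral_one_le_norm_rpow_lt_top μ hq).ne, mul_comm]

theorem exists_setLIntegral_norm_sub_rpow_mul_norm_rpow_le {p κ : ℝ} (hp : p ≤ 0)
    (hpd : 0 < p + finrank ℝ E) (hκ : (finrank ℝ E : ℝ) < κ) :
    ∃ C > 0, ∀ R > 0, ∀ x : E, x ≠ 0 →
      ∫⁻ y in {y | R ≤ ‖y‖}, ENNReal.ofReal (‖x - y‖ ^ p * ‖y‖ ^ (-κ)) ∂μ ≤
        ENNReal.ofReal (C * ((R ^ ((finrank ℝ E : ℝ) - κ) + ‖x‖ ^ ((finrank ℝ E : ℝ) - κ)) *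
          ‖x‖ ^ p)) := by
  set d : ℝ := (finrank ℝ E : ℝ)
  have hd1 : 1 ≤ finrank ℝ E := Nat.cast_pos.1 (by linarith : (0 : ℝ) < d)
  obtain ⟨K₁, hK₁, h₁⟩ := exists_setLIntegral_le_norm_rpow_eq μ (q := -κ) (by linarith)
  obtain ⟨K₂, hK₂, h₂⟩ := exists_setLIntegral_ball_norm_rpow_eq μ hd1 hpd
  obtain ⟨K₃, hK₃, h₃⟩ := exists_setLIntegral_le_norm_rpow_eq μ (q := p - κ) (by linarith)
  set a := 2 ^ (-p) * K₁
  set b := 2 ^ (κ - p - d) * (K₂ + 3 ^ (-p) * K₃)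
  refine ⟨a + b + 1, by positivity, fun R hR x hx ↦ ?_⟩
  have hx0 : 0 < ‖x‖ := norm_pos_iff.2 hx
  have hr0 : 0 < ‖x‖ / 2 := by positivity
  have htrans : ∫⁻ y in (x - ·) ⁻¹' ball 0 (‖x‖ / 2), ENNReal.ofReal (‖x - y‖ ^ p) ∂μ =
      ∫⁻ z in ball 0 (‖x‖ / 2), ENNReal.ofReal (‖z‖ ^ p) ∂μ :=
    (Measure.measurePreserving_sub_left μ x).setLIntegral_comp_preimage_emb
      (MeasurableEquiv.subLeft x).measurableEmbedding (fun z ↦ ENNReal.ofReal (‖z‖ ^ p)) _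
  have hhalf : ∀ s : ℝ, (‖x‖ / 2) ^ s = 2 ^ (-s) * ‖x‖ ^ s := fun s ↦ by
    rw [Real.div_rpow hx0.le zero_le_two, Real.rpow_neg zero_le_two, div_eq_inv_mul]
  have hnear : (‖x‖ / 2) ^ (-κ) * (K₂ * (‖x‖ / 2) ^ (p + d)) +
      3 ^ (-p) * (K₃ * (‖x‖ / 2) ^ (p - κ + d)) = b * (‖x‖ ^ (d - κ) * ‖x‖ ^ p) := by
    rw [mul_left_comm, ← Real.rpow_add hr0, hhalf, hhalf,
      ← Real.rpow_add hx0, show -κ + (p + d) = p - κ + d by ring,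
      show d - κ + p = p - κ + d by ring, show -(p - κ + d) = κ - p - d by ring]
    ring
  have hfar : (‖x‖ / 2) ^ p * (K₁ * R ^ (-κ + d)) = a * (R ^ (d - κ) * ‖x‖ ^ p) := by
    rw [hhalf, show -κ + d = d - κ by ring]
    ring
  refine (setLIntegral_norm_sub_rpow_mul_norm_rpow_le μ hx R hp (by linarith)).trans ?_
  rw [htrans, h₁ R hR, h₂ _ hr0, h₃ _ hr0, ← ENNReal.ofReal_mul (by positivity),
    ← ENNReal.ofReal_mul (by positivity), ← ENNReal.ofReal_mul (by positivity),
    ← ENNReal.ofReal_add (by positivity) (by positivity),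
    ← ENNReal.ofReal_add (by positivity) (by positivity), add_assoc, hnear, hfar]
  refine ENNReal.ofReal_le_ofReal ?_
  have hP : 0 ≤ R ^ (d - κ) * ‖x‖ ^ p := by positivity
  have hQ : 0 ≤ ‖x‖ ^ (d - κ) * ‖x‖ ^ p := by positivity
  have ha : 0 ≤ a := by positivity
  have hb : 0 ≤ b := by positivity
  nlinarith [mul_nonneg ha hQ, mul_nonneg hb hP]

end

/-- Let `n ≥ 3` and `κ > n`. There exists `C > 0`, depending only on `n` and `κ`, such that
for every `R > 0` and every `x ∈ ℝⁿ`, `x ≠ 0`, one has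
`∫_{|y| ≥ R} |x − y|^{2−n} |y|^{−κ} dy ≤ C (R^{n−κ} + |x|^{n−κ}) |x|^{2−n}`. -/
theorem integral_riesz_kernel_estimate (n : ℕ) (hn : 3 ≤ n) (κ : ℝ) (hκ : (n : ℝ) < κ) :
    ∃ C > 0, ∀ R > 0, ∀ x : EuclideanSpace ℝ (Fin n), x ≠ 0 →
      (∫ y in {y : EuclideanSpace ℝ (Fin n) | R ≤ ‖y‖},
          ‖x - y‖ ^ ((2 : ℝ) - n) * ‖y‖ ^ (-κ))
        ≤ C * ((R ^ ((n : ℝ) - κ) + ‖x‖ ^ ((n : ℝ) - κ)) * ‖x‖ ^ ((2 : ℝ) - n)) := by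
  have hn' : (3 : ℝ) ≤ n := by exact_mod_cast hn
  obtain ⟨C, hC, hbound⟩ := exists_setLIntegral_norm_sub_rpow_mul_norm_rpow_le
    (volume : Measure (EuclideanSpace ℝ (Fin n))) (p := 2 - n) (κ := κ)
    (by linarith) (by simp) (by simpa using hκ)
  simp only [finrank_euclideanSpace_fin] at hbound
  refine ⟨C, hC, fun R hR x hx ↦ ?_⟩
  rw [integral_eq_lintegral_of_nonneg_ae (.of_forall fun y ↦ by positivity) (by fun_prop)]
  exact ENNReal.toReal_le_of_le_ofReal (by positivity) (hbound R hR x hx)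
end

section
/- Let n ≥ 3, R > 0, δ < 0, let E be a finite-dimensional real normed vector space, and let ω : {x ∈ ℝⁿ : |x| > R} → E be a smooth map that is componentwise harmonic (i.e. ∑_{i=1}^n ∂²ω/∂x_i² = 0) and satisfies ω = 𝒪_∞(r^δ). Then ω = 𝒪_∞(r^{2−n}). -/
/-!
Test a harmonic map against continuous linear functionals, which reduces everything to scalar
harmonic functions `u`. If `u ≤ C ‖y‖^δ` with `δ < 0`, the weak maximum principle on the annuli
`R₁ < ‖y‖ < ρ` compares `u` with the harmonic barrier `M ‖y‖^(2-n)`, which dominates `u` on the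
inner sphere; letting `ρ → ∞` gives `u ≤ M ‖y‖^(2-n)`. The derivatives are again harmonic, and
Bernstein's estimate (the maximum principle applied to `(ρ² - ‖y - z‖²)² |∇u|² + λ u²`) bounds
`|∇u(z)|` by `(2n + 12) sup |u| / ρ` on a ball of radius `ρ`. On balls of radius `‖x‖ / 2` this
gains one power of `‖x‖` per derivative.
-/

/-- The Laplacian `Δf = ∑ i, ∂²f/∂xᵢ²` of a map `f : ℝⁿ → E`, computed via iterated
Fréchet derivatives in the coordinate directions. -/
noncomputable def vecLaplacian {n : ℕ} {E : Type*} [NormedAddCommGroup E] [NormedSpace ℝ E]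
    (f : EuclideanSpace ℝ (Fin n) → E) (x : EuclideanSpace ℝ (Fin n)) : E :=
  ∑ i : Fin n,
    fderiv ℝ (fun y => fderiv ℝ f y (EuclideanSpace.single i 1)) x (EuclideanSpace.single i 1)

/-- `f` is harmonic on the open set `U`: it is smooth on `U` and `Δf = 0` on `U`. -/
def IsHarmonicOn {n : ℕ} {E : Type*} [NormedAddCommGroup E] [NormedSpace ℝ E]
    (f : EuclideanSpace ℝ (Fin n) → E) (U : Set (EuclideanSpace ℝ (Fin n))) : Prop :=
  ContDiffOn ℝ (⊤ : ℕ∞) f U ∧ ∀ x ∈ U, vecLaplacian f x = 0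

/-- `f = 𝒪_∞(r^α)` on `{|x| > R}`: for every `j ∈ ℕ` there are `C > 0` and `R₀ ≥ R` such
that the `j`-th total derivative satisfies `‖D^j f(x)‖ ≤ C |x|^{α−j}` for all `|x| ≥ R₀`. -/
def BigOInfty {n : ℕ} {E : Type*} [NormedAddCommGroup E] [NormedSpace ℝ E]
    (f : EuclideanSpace ℝ (Fin n) → E) (R α : ℝ) : Prop :=
  ∀ j : ℕ, ∃ C > 0, ∃ R₀ ≥ R, ∀ x : EuclideanSpace ℝ (Fin n), R₀ ≤ ‖x‖ →
    ‖iteratedFDeriv ℝ j f x‖ ≤ C * ‖x‖ ^ (α - (j : ℝ))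

open Metric Filter Topology InnerProductSpace

section PartialDeriv

variable {E F G : Type*} [NormedAddCommGroup E] [NormedSpace ℝ E]
  [NormedAddCommGroup F] [NormedSpace ℝ F] [NormedAddCommGroup G] [NormedSpace ℝ G]

noncomputable def partialDeriv (v : E) (f : E → F) : E → F := fun x => fderiv ℝ f x v

variable {f g : E → F} {U : Set E} {x : E}

theorem ContDiffOn.differentiableAt_of_isOpen (hf : ContDiffOn ℝ (⊤ : ℕ∞) f U)
    (hU : IsOpen U) (hx : x ∈ U) : DifferentiableAt ℝ f x :=
  (hf.contDiffAt (hU.mem_nhds hx)).differentiableAt (by simp)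

theorem ContDiffOn.partialDeriv (hf : ContDiffOn ℝ (⊤ : ℕ∞) f U) (hU : IsOpen U) (v : E) :
    ContDiffOn ℝ (⊤ : ℕ∞) (partialDeriv v f) U :=
  (hf.fderiv_of_isOpen hU le_rfl).clm_apply contDiffOn_const

theorem Filter.EventuallyEq.partialDeriv_eq (h : f =ᶠ[𝓝 x] g) (v : E) :
    partialDeriv v f x = partialDeriv v g x := by
  simp only [partialDeriv, h.fderiv_eq]

theorem partialDeriv_congr_of_isOpen (hU : IsOpen U) (hx : x ∈ U) (h : Set.EqOn f g U)
    (v : E) : partialDeriv v f x = partialDeriv v g x :=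
  (Filter.eventuallyEq_of_mem (hU.mem_nhds hx) h).partialDeriv_eq v

theorem partialDeriv_const (c : F) (v : E) : partialDeriv v (fun _ : E => c) x = 0 := by
  simp [partialDeriv]

theorem partialDeriv_add (hf : DifferentiableAt ℝ f x) (hg : DifferentiableAt ℝ g x) (v : E) :
    partialDeriv v (fun y => f y + g y) x = partialDeriv v f x + partialDeriv v g x := by
  simp [partialDeriv, fderiv_fun_add hf hg]

theorem partialDeriv_sum {ι : Type*} {s : Finset ι} {f : ι → E → F}
    (hf : ∀ k ∈ s, DifferentiableAt ℝ (f k) x) (v : E) :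
    partialDeriv v (fun y => ∑ k ∈ s, f k y) x = ∑ k ∈ s, partialDeriv v (f k) x := by
  simp [partialDeriv, fderiv_fun_sum hf]

theorem partialDeriv_mul {f g : E → ℝ} (hf : DifferentiableAt ℝ f x)
    (hg : DifferentiableAt ℝ g x) (v : E) :
    partialDeriv v (fun y => f y * g y) x =
      f x * partialDeriv v g x + g x * partialDeriv v f x := by
  simp [partialDeriv, fderiv_fun_mul hf hg]

theorem partialDeriv_sum_mul_self {ι : Type*} {s : Finset ι} {g : ι → E → ℝ}
    (hg : ∀ k ∈ s, DifferentiableAt ℝ (g k) x) (v : E) :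
    partialDeriv v (fun y => ∑ k ∈ s, g k y * g k y) x =
      2 * ∑ k ∈ s, g k x * partialDeriv v (g k) x := by
  rw [partialDeriv_sum (fun k hk => (hg k hk).fun_mul (hg k hk)), Finset.mul_sum]
  exact Finset.sum_congr rfl fun k hk => by rw [partialDeriv_mul (hg k hk) (hg k hk)]; ring

theorem partialDeriv_clm_comp (T : F →L[ℝ] G) (hf : DifferentiableAt ℝ f x) (v : E) :
    partialDeriv v (fun y => T (f y)) x = T (partialDeriv v f x) := by
  have hT : fderiv ℝ (T ∘ f) x = T.comp (fderiv ℝ f x) :=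
    (T.hasFDerivAt.comp x hf.hasFDerivAt).fderiv
  exact congrArg (fun L : E →L[ℝ] G => L v) hT

theorem partialDeriv_clm_apply {h : E → E →L[ℝ] F} (hh : DifferentiableAt ℝ h x) (u v : E) :
    partialDeriv v (fun y => h y u) x = partialDeriv v h x u := by
  simp [partialDeriv, fderiv_clm_apply hh (differentiableAt_const u)]

theorem partialDeriv_comm (hf : ContDiffOn ℝ (⊤ : ℕ∞) f U) (hU : IsOpen U) (hx : x ∈ U)
    (v w : E) : partialDeriv v (partialDeriv w f) x = partialDeriv w (partialDeriv v f) x := by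
  have hf' := (hf.fderiv_of_isOpen hU le_rfl).differentiableAt_of_isOpen hU hx
  calc partialDeriv v (partialDeriv w f) x = fderiv ℝ (fderiv ℝ f) x v w :=
        partialDeriv_clm_apply hf' w v
    _ = fderiv ℝ (fderiv ℝ f) x w v :=
        (hf.contDiffAt (hU.mem_nhds hx)).isSymmSndFDerivAt (by simp [ENat.LEInfty.out]) v w
    _ = partialDeriv w (partialDeriv v f) x := (partialDeriv_clm_apply hf' v w).symm

end PartialDeriv

section Radial

variable {E : Type*} [NormedAddCommGroup E] [InnerProductSpace ℝ E] {x z : E}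

theorem partialDeriv_comp_norm_sub_sq {h : ℝ → ℝ} {d : ℝ} (hh : HasDerivAt h d (‖x - z‖ ^ 2))
    (v : E) : partialDeriv v (fun y => h (‖y - z‖ ^ 2)) x = 2 * d * ⟪x - z, v⟫_ℝ := by
  have hq := (hasFDerivAt_sub_const (x := x) z).norm_sq
  have H : HasFDerivAt (fun y => h (‖y - z‖ ^ 2)) _ x := hh.comp_hasFDerivAt x hq
  rw [partialDeriv, H.fderiv]
  simp [inner_sub_left]
  ring

theorem partialDeriv_inner_sub (v w : E) :
    partialDeriv v (fun y => ⟪y - z, w⟫_ℝ) x = ⟪v, w⟫_ℝ := by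
  have hw := (hasFDerivAt_sub_const (x := x) z).inner ℝ (hasFDerivAt_const w x)
  rw [partialDeriv, hw.fderiv]
  simp

end Radial

local notation "∂[" i "]" => partialDeriv (EuclideanSpace.single i (1 : ℝ))

section Laplacian

variable {n : ℕ} {F G : Type*} [NormedAddCommGroup F] [NormedSpace ℝ F]
  [NormedAddCommGroup G] [NormedSpace ℝ G]
  {f g : EuclideanSpace ℝ (Fin n) → F} {U : Set (EuclideanSpace ℝ (Fin n))}
  {x z : EuclideanSpace ℝ (Fin n)}

theorem vecLaplacian_eq_sum (f : EuclideanSpace ℝ (Fin n) → F)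
    (x : EuclideanSpace ℝ (Fin n)) : vecLaplacian f x = ∑ i, ∂[i] (∂[i] f) x :=
  rfl

theorem vecLaplacian_add (hf : ContDiffOn ℝ (⊤ : ℕ∞) f U) (hg : ContDiffOn ℝ (⊤ : ℕ∞) g U)
    (hU : IsOpen U) (hx : x ∈ U) :
    vecLaplacian (fun y => f y + g y) x = vecLaplacian f x + vecLaplacian g x := by
  simp only [vecLaplacian_eq_sum, ← Finset.sum_add_distrib]
  refine Finset.sum_congr rfl fun i _ => ?_
  rw [partialDeriv_congr_of_isOpen hU hx (fun y hy => partialDeriv_add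
      (hf.differentiableAt_of_isOpen hU hy) (hg.differentiableAt_of_isOpen hU hy) _),
    partialDeriv_add ((hf.partialDeriv hU _).differentiableAt_of_isOpen hU hx)
      ((hg.partialDeriv hU _).differentiableAt_of_isOpen hU hx)]

theorem vecLaplacian_sum {ι : Type*} {s : Finset ι} {f : ι → EuclideanSpace ℝ (Fin n) → F}
    (hf : ∀ k ∈ s, ContDiffOn ℝ (⊤ : ℕ∞) (f k) U) (hU : IsOpen U) (hx : x ∈ U) :
    vecLaplacian (fun y => ∑ k ∈ s, f k y) x = ∑ k ∈ s, vecLaplacian (f k) x := by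
  simp only [vecLaplacian_eq_sum]
  rw [Finset.sum_comm]
  refine Finset.sum_congr rfl fun i _ => ?_
  rw [partialDeriv_congr_of_isOpen hU hx (fun y hy => partialDeriv_sum
      (fun k hk => (hf k hk).differentiableAt_of_isOpen hU hy) _),
    partialDeriv_sum fun k hk => ((hf k hk).partialDeriv hU _).differentiableAt_of_isOpen hU hx]

theorem vecLaplacian_mul {f g : EuclideanSpace ℝ (Fin n) → ℝ}
    (hf : ContDiffOn ℝ (⊤ : ℕ∞) f U) (hg : ContDiffOn ℝ (⊤ : ℕ∞) g U) (hU : IsOpen U)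
    (hx : x ∈ U) :
    vecLaplacian (fun y => f y * g y) x =
      f x * vecLaplacian g x + 2 * ∑ i, ∂[i] f x * ∂[i] g x + g x * vecLaplacian f x := by
  have hf' := fun i => (hf.partialDeriv hU (EuclideanSpace.single i 1))
  have hg' := fun i => (hg.partialDeriv hU (EuclideanSpace.single i 1))
  have hterm : ∀ i, ∂[i] (∂[i] fun y => f y * g y) x =
      f x * ∂[i] (∂[i] g) x + 2 * (∂[i] f x * ∂[i] g x) + g x * ∂[i] (∂[i] f) x := by
    intro i
    rw [partialDeriv_congr_of_isOpen hU hx (fun y hy => partialDeriv_mul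
        (hf.differentiableAt_of_isOpen hU hy) (hg.differentiableAt_of_isOpen hU hy) _),
      partialDeriv_add
        ((hf.differentiableAt_of_isOpen hU hx).fun_mul ((hg' i).differentiableAt_of_isOpen hU hx))
        ((hg.differentiableAt_of_isOpen hU hx).fun_mul ((hf' i).differentiableAt_of_isOpen hU hx)),
      partialDeriv_mul (hf.differentiableAt_of_isOpen hU hx)
        ((hg' i).differentiableAt_of_isOpen hU hx),
      partialDeriv_mul (hg.differentiableAt_of_isOpen hU hx)
        ((hf' i).differentiableAt_of_isOpen hU hx)]
    ring
  simp only [vecLaplacian_eq_sum, hterm, Finset.sum_add_distrib, Finset.mul_sum]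

theorem vecLaplacian_clm_comp (T : F →L[ℝ] G) (hf : ContDiffOn ℝ (⊤ : ℕ∞) f U)
    (hU : IsOpen U) (hx : x ∈ U) : vecLaplacian (fun y => T (f y)) x = T (vecLaplacian f x) := by
  simp only [vecLaplacian_eq_sum, map_sum]
  refine Finset.sum_congr rfl fun i _ => ?_
  rw [partialDeriv_congr_of_isOpen hU hx
      (fun y hy => partialDeriv_clm_comp T (hf.differentiableAt_of_isOpen hU hy) _),
    partialDeriv_clm_comp T ((hf.partialDeriv hU _).differentiableAt_of_isOpen hU hx)]

theorem vecLaplacian_const_smul (c : ℝ) (hf : ContDiffOn ℝ (⊤ : ℕ∞) f U) (hU : IsOpen U)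
    (hx : x ∈ U) : vecLaplacian (fun y => c • f y) x = c • vecLaplacian f x :=
  vecLaplacian_clm_comp (c • ContinuousLinearMap.id ℝ F) hf hU hx

theorem vecLaplacian_partialDeriv (hf : ContDiffOn ℝ (⊤ : ℕ∞) f U) (hU : IsOpen U)
    (hx : x ∈ U) (v : EuclideanSpace ℝ (Fin n)) :
    vecLaplacian (partialDeriv v f) x = partialDeriv v (vecLaplacian f) x := by
  rw [vecLaplacian_eq_sum, funext (vecLaplacian_eq_sum f), partialDeriv_sum fun i _ =>
    (((hf.partialDeriv hU _).partialDeriv hU _).differentiableAt_of_isOpen hU hx)]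
  refine Finset.sum_congr rfl fun i _ => ?_
  rw [partialDeriv_comm (hf.partialDeriv hU _) hU hx v,
    partialDeriv_congr_of_isOpen hU hx (fun y hy => partialDeriv_comm hf hU hy v _)]

theorem vecLaplacian_comp_norm_sub_sq {h h' : ℝ → ℝ} {h'' : ℝ}
    (hh : ∀ᶠ t in 𝓝 (‖x - z‖ ^ 2), HasDerivAt h (h' t) t)
    (hh' : HasDerivAt h' h'' (‖x - z‖ ^ 2)) :
    vecLaplacian (fun y => h (‖y - z‖ ^ 2)) x =
      2 * n * h' (‖x - z‖ ^ 2) + 4 * ‖x - z‖ ^ 2 * h'' := by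
  have hnear : ∀ᶠ y in 𝓝 x, HasDerivAt h (h' (‖y - z‖ ^ 2)) (‖y - z‖ ^ 2) :=
    ((continuous_id.sub continuous_const).norm.pow 2).continuousAt.eventually hh
  have hterm : ∀ i : Fin n, ∂[i] (∂[i] fun y => h (‖y - z‖ ^ 2)) x =
      2 * h' (‖x - z‖ ^ 2) + 4 * h'' * (x - z) i ^ 2 := by
    intro i
    have hfirst : (∂[i] fun y => h (‖y - z‖ ^ 2)) =ᶠ[𝓝 x]
        fun y => (2 * h' (‖y - z‖ ^ 2)) * ⟪y - z, EuclideanSpace.single i 1⟫_ℝ :=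
      hnear.mono fun y hy => partialDeriv_comp_norm_sub_sq hy _
    have hh'2 : HasDerivAt (fun t => 2 * h' t) (2 * h'') (‖x - z‖ ^ 2) := hh'.const_mul 2
    have hq := (hasFDerivAt_sub_const (x := x) z).norm_sq
    have hd₁ : DifferentiableAt ℝ (fun y => 2 * h' (‖y - z‖ ^ 2)) x :=
      DifferentiableAt.comp (g := fun t => 2 * h' t) x hh'2.differentiableAt hq.differentiableAt
    have hd₂ : DifferentiableAt ℝ (fun y => ⟪y - z, EuclideanSpace.single i (1 : ℝ)⟫_ℝ) x :=
      ((hasFDerivAt_sub_const z).inner ℝ (hasFDerivAt_const _ x)).differentiableAt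
    rw [hfirst.partialDeriv_eq, partialDeriv_mul hd₁ hd₂, partialDeriv_comp_norm_sub_sq hh'2,
      partialDeriv_inner_sub]
    simp [EuclideanSpace.inner_single_right]
    ring
  simp only [vecLaplacian_eq_sum, hterm, Finset.sum_add_distrib, ← Finset.mul_sum,
    Finset.sum_const, Finset.card_univ, Fintype.card_fin, nsmul_eq_mul]
  rw [← EuclideanSpace.real_norm_sq_eq]
  ring

end Laplacian

section Harmonic

variable {n : ℕ} {F G : Type*} [NormedAddCommGroup F] [NormedSpace ℝ F]
  [NormedAddCommGroup G] [NormedSpace ℝ G]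
  {f g : EuclideanSpace ℝ (Fin n) → F} {U V : Set (EuclideanSpace ℝ (Fin n))}

theorem IsHarmonicOn.mono (hf : IsHarmonicOn f U) (hVU : V ⊆ U) : IsHarmonicOn f V :=
  ⟨hf.1.mono hVU, fun x hx => hf.2 x (hVU hx)⟩

theorem IsHarmonicOn.add (hf : IsHarmonicOn f U) (hg : IsHarmonicOn g U) (hU : IsOpen U) :
    IsHarmonicOn (fun y => f y + g y) U :=
  ⟨hf.1.add hg.1, fun x hx => by
    rw [vecLaplacian_add hf.1 hg.1 hU hx, hf.2 x hx, hg.2 x hx, add_zero]⟩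

theorem IsHarmonicOn.clm_comp (hf : IsHarmonicOn f U) (hU : IsOpen U) (T : F →L[ℝ] G) :
    IsHarmonicOn (fun y => T (f y)) U :=
  ⟨T.contDiff.comp_contDiffOn hf.1, fun x hx => by
    rw [vecLaplacian_clm_comp T hf.1 hU hx, hf.2 x hx, map_zero]⟩

theorem IsHarmonicOn.const_smul (hf : IsHarmonicOn f U) (hU : IsOpen U) (c : ℝ) :
    IsHarmonicOn (fun y => c • f y) U :=
  hf.clm_comp hU (c • ContinuousLinearMap.id ℝ F)

theorem IsHarmonicOn.partialDeriv (hf : IsHarmonicOn f U) (hU : IsOpen U)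
    (v : EuclideanSpace ℝ (Fin n)) : IsHarmonicOn (partialDeriv v f) U :=
  ⟨hf.1.partialDeriv hU v, fun x hx => by
    rw [vecLaplacian_partialDeriv hf.1 hU hx, partialDeriv_congr_of_isOpen hU hx hf.2,
      partialDeriv_const]⟩

theorem IsHarmonicOn.fderiv_of_isOpen (hf : IsHarmonicOn f U) (hU : IsOpen U) :
    IsHarmonicOn (fderiv ℝ f) U := by
  have hf' := hf.1.fderiv_of_isOpen (m := (⊤ : ℕ∞)) hU le_rfl
  refine ⟨hf', fun x hx => ContinuousLinearMap.ext fun v => ?_⟩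
  have hv := vecLaplacian_clm_comp (ContinuousLinearMap.apply ℝ F v) hf' hU hx
  rw [ContinuousLinearMap.apply_apply] at hv
  rw [← hv, zero_apply]
  exact (hf.partialDeriv hU v).2 x hx

theorem isHarmonicOn_norm_rpow_two_sub :
    IsHarmonicOn (fun y : EuclideanSpace ℝ (Fin n) => ‖y‖ ^ (2 - (n : ℝ))) {y | y ≠ 0} := by
  set a : ℝ := (2 - n) / 2
  have hform : (fun y : EuclideanSpace ℝ (Fin n) => ‖y‖ ^ (2 - (n : ℝ))) =
      fun y => (‖y - 0‖ ^ 2) ^ a := by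
    funext y
    rw [sub_zero, ← Real.rpow_natCast, ← Real.rpow_mul (norm_nonneg y)]
    congr 1
    ring
  rw [hform]
  refine ⟨fun y hy => ?_, fun y hy => ?_⟩
  · have hq : ‖y - 0‖ ^ 2 ≠ 0 := by simpa using hy
    exact ((Real.contDiffAt_rpow_const_of_ne hq).comp y
      ((contDiff_id.sub contDiff_const).norm_sq ℝ).contDiffAt).contDiffWithinAt
  · have hq : 0 < ‖y - 0‖ ^ 2 := by rw [sub_zero]; exact pow_pos (norm_pos_iff.2 hy) 2
    rw [vecLaplacian_comp_norm_sub_sq (h' := fun t => a * t ^ (a - 1))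
      ((eventually_ne_nhds hq.ne').mono fun t ht => Real.hasDerivAt_rpow_const (Or.inl ht))
      ((Real.hasDerivAt_rpow_const (Or.inl hq.ne')).const_mul a)]
    have hpow : (‖y - 0‖ ^ 2) ^ (a - 1) = (‖y - 0‖ ^ 2) ^ (a - 1 - 1) * ‖y - 0‖ ^ 2 := by
      rw [← Real.rpow_add_one hq.ne']
      ring_nf
    rw [hpow]
    simp only [a]
    ring

end Harmonic

section MaximumPrinciple

theorem IsLocalMax.deriv_deriv_nonpos {f : ℝ → ℝ} {a : ℝ} (h : IsLocalMax f a)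
    (hc : ContinuousAt f a) : deriv (deriv f) a ≤ 0 := by
  by_contra! hpos
  -- the second derivative test makes `a` a local minimum as well, so `f` is locally constant
  have hmin := isLocalMin_of_deriv_deriv_pos hpos h.deriv_eq_zero hc
  have hconst : f =ᶠ[𝓝 a] fun _ => f a := (h.and hmin).mono fun x hx => le_antisymm hx.1 hx.2
  rw [hconst.deriv.deriv_eq] at hpos
  simp at hpos

theorem IsLocalMax.partialDeriv_partialDeriv_nonpos {E : Type*} [NormedAddCommGroup E]
    [NormedSpace ℝ E] {g : E → ℝ} {U : Set E} {p : E} (hmax : IsLocalMax g p)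
    (hg : ContDiffOn ℝ (⊤ : ℕ∞) g U) (hU : IsOpen U) (hp : p ∈ U) (v : E) :
    partialDeriv v (partialDeriv v g) p ≤ 0 := by
  set γ : ℝ → E := fun t => p + t • v
  have hγ : ∀ t, HasDerivAt γ v t := fun t => by
    simpa [γ] using ((hasDerivAt_id t).smul_const v).const_add p
  have hγ0 : γ 0 = p := by simp [γ]
  have hchain : ∀ {h : E → ℝ} {t : ℝ}, DifferentiableAt ℝ h (γ t) →
      HasDerivAt (h ∘ γ) (partialDeriv v h (γ t)) t :=
    fun hh => hh.hasFDerivAt.comp_hasDerivAt _ (hγ _)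
  have hγU : ∀ᶠ t in 𝓝 0, γ t ∈ U :=
    (hγ 0).continuousAt.preimage_mem_nhds (by rw [hγ0]; exact hU.mem_nhds hp)
  have hderiv : deriv (g ∘ γ) =ᶠ[𝓝 0] partialDeriv v g ∘ γ :=
    hγU.mono fun t ht => (hchain (hg.differentiableAt_of_isOpen hU ht)).deriv
  have hdiff : DifferentiableAt ℝ (partialDeriv v g) (γ 0) := by
    rw [hγ0]; exact (hg.partialDeriv hU v).differentiableAt_of_isOpen hU hp
  calc partialDeriv v (partialDeriv v g) p = deriv (deriv (g ∘ γ)) 0 := by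
        rw [hderiv.deriv_eq, (hchain hdiff).deriv, hγ0]
    _ ≤ 0 := IsLocalMax.deriv_deriv_nonpos ((hγ0 ▸ hmax).comp_continuous (hγ 0).continuousAt)
        (hchain (hγ0 ▸ hg.differentiableAt_of_isOpen hU hp)).continuousAt

variable {n : ℕ}

theorem IsLocalMax.vecLaplacian_nonpos {g : EuclideanSpace ℝ (Fin n) → ℝ}
    {U : Set (EuclideanSpace ℝ (Fin n))} {p : EuclideanSpace ℝ (Fin n)} (hmax : IsLocalMax g p)
    (hg : ContDiffOn ℝ (⊤ : ℕ∞) g U) (hU : IsOpen U) (hp : p ∈ U) : vecLaplacian g p ≤ 0 :=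
  Finset.sum_nonpos fun _ _ => hmax.partialDeriv_partialDeriv_nonpos hg hU hp _

theorem le_of_forall_mem_frontier_le_of_vecLaplacian_nonneg (hn : 0 < n)
    {U : Set (EuclideanSpace ℝ (Fin n))} (hU : IsOpen U) (hb : Bornology.IsBounded U)
    {g : EuclideanSpace ℝ (Fin n) → ℝ} (hc : ContinuousOn g (closure U))
    (hg : ContDiffOn ℝ (⊤ : ℕ∞) g U) (hΔ : ∀ y ∈ U, 0 ≤ vecLaplacian g y) {M : ℝ}
    (hM : ∀ y ∈ frontier U, g y ≤ M) {x : EuclideanSpace ℝ (Fin n)} (hx : x ∈ closure U) :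
    g x ≤ M := by
  obtain ⟨r, hr⟩ := hb.subset_closedBall x
  have hclos : closure U ⊆ closedBall x r := closure_minimal hr isClosed_closedBall
  -- `g + ε ‖· - x‖²` is strictly subharmonic, so it attains its maximum on the frontier
  have hperturb : ∀ ε > 0, g x ≤ M + ε * r ^ 2 := by
    intro ε hε
    have hq : ContDiff ℝ (⊤ : ℕ∞) fun y : EuclideanSpace ℝ (Fin n) => ε * ‖y - x‖ ^ 2 :=
      contDiff_const.mul ((contDiff_id.sub contDiff_const).norm_sq ℝ)
    obtain ⟨p, hp, hpmax⟩ :=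
      hb.isCompact_closure.exists_isMaxOn (f := fun y => g y + ε * ‖y - x‖ ^ 2) ⟨x, hx⟩
        (hc.add hq.continuous.continuousOn)
    have hpU : p ∉ U := by
      intro hpU
      have hΔq : vecLaplacian (fun y => ε * ‖y - x‖ ^ 2) p = 2 * n * ε := by
        rw [vecLaplacian_comp_norm_sub_sq (h := fun t => ε * t) (h' := fun _ => ε)
          (Eventually.of_forall fun t => by simpa using (hasDerivAt_id t).const_mul ε)
          (hasDerivAt_const _ ε)]
        ring
      have hmax := (hpmax.isLocalMax (mem_of_superset (hU.mem_nhds hpU) subset_closure)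
        ).vecLaplacian_nonpos (hg.add hq.contDiffOn) hU hpU
      rw [vecLaplacian_add hg hq.contDiffOn hU hpU, hΔq] at hmax
      have : (0 : ℝ) < 2 * n * ε := by positivity
      linarith [hΔ p hpU]
    have hpM : g p ≤ M := hM p ⟨hp, by rwa [hU.interior_eq]⟩
    have hpr : ‖p - x‖ ≤ r := by simpa [dist_eq_norm] using hclos hp
    calc g x = g x + ε * ‖x - x‖ ^ 2 := by simp
      _ ≤ g p + ε * ‖p - x‖ ^ 2 := hpmax hx
      _ ≤ M + ε * r ^ 2 := by gcongr
  refine le_of_forall_pos_le_add fun δ hδ => ?_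
  calc g x ≤ M + δ / (r ^ 2 + 1) * r ^ 2 := hperturb _ (by positivity)
    _ ≤ M + δ := by
      gcongr
      rw [div_mul_eq_mul_div, div_le_iff₀ (by positivity)]
      nlinarith

end MaximumPrinciple

section Exterior

variable {n : ℕ} {F : Type*} [NormedAddCommGroup F] [NormedSpace ℝ F]

theorem IsHarmonicOn.le_of_le_on_spheres (hn : 0 < n) {g : EuclideanSpace ℝ (Fin n) → ℝ}
    {D : Set (EuclideanSpace ℝ (Fin n))} (hg : IsHarmonicOn g D) {r₁ r₂ M : ℝ} (hr : r₁ < r₂)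
    (hD : ∀ y, r₁ ≤ ‖y‖ → ‖y‖ ≤ r₂ → y ∈ D) (h₁ : ∀ y, ‖y‖ = r₁ → g y ≤ M)
    (h₂ : ∀ y, ‖y‖ = r₂ → g y ≤ M) {x : EuclideanSpace ℝ (Fin n)} (hx₁ : r₁ < ‖x‖)
    (hx₂ : ‖x‖ < r₂) : g x ≤ M := by
  set A := (norm : EuclideanSpace ℝ (Fin n) → ℝ) ⁻¹' Set.Ioo r₁ r₂
  have hAcl : closure A ⊆ norm ⁻¹' Set.Icc r₁ r₂ := by
    simpa [closure_Ioo hr.ne] using continuous_norm.closure_preimage_subset (Set.Ioo r₁ r₂)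
  have hAD : closure A ⊆ D := fun y hy => hD y (hAcl hy).1 (hAcl hy).2
  refine le_of_forall_mem_frontier_le_of_vecLaplacian_nonneg hn
    (isOpen_Ioo.preimage continuous_norm)
    ((isBounded_closedBall (x := 0) (r := r₂)).subset fun y hy => by simpa using hy.2.le)
    (hg.1.continuousOn.mono hAD) (hg.1.mono (subset_closure.trans hAD))
    (fun y hy => (hg.2 y (hAD (subset_closure hy))).ge) (fun y hy => ?_) (subset_closure ⟨hx₁, hx₂⟩)
  have hy := continuous_norm.frontier_preimage_subset _ hy
  rw [frontier_Ioo hr] at hy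
  rcases hy with hy | hy
  exacts [h₁ y hy, h₂ y hy]

theorem IsHarmonicOn.le_mul_norm_rpow_two_sub (hn : 0 < n)
    {u : EuclideanSpace ℝ (Fin n) → ℝ} {R R₁ C β : ℝ} (hu : IsHarmonicOn u {y | R < ‖y‖})
    (hR₁ : 0 < R₁) (hRR₁ : R < R₁) (hC : 0 ≤ C) (hβ : β < 0)
    (hdec : ∀ y, R₁ ≤ ‖y‖ → u y ≤ C * ‖y‖ ^ β) {x : EuclideanSpace ℝ (Fin n)}
    (hx : R₁ < ‖x‖) : u x ≤ C * R₁ ^ (β - (2 - n)) * ‖x‖ ^ (2 - (n : ℝ)) := by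
  set M := C * R₁ ^ (β - (2 - n))
  have hM : 0 ≤ M := by positivity
  have hMR₁ : M * R₁ ^ (2 - (n : ℝ)) = C * R₁ ^ β := by
    rw [mul_assoc, ← Real.rpow_add hR₁]
    ring_nf
  set D := {y : EuclideanSpace ℝ (Fin n) | R < ‖y‖} ∩ {y | y ≠ 0}
  have hD : IsOpen D := (isOpen_lt continuous_const continuous_norm).inter isOpen_ne
  have hg : IsHarmonicOn (fun y => u y + (-M) • ‖y‖ ^ (2 - (n : ℝ))) D :=
    (hu.mono Set.inter_subset_left).add
      ((isHarmonicOn_norm_rpow_two_sub.mono Set.inter_subset_right).const_smul hD (-M)) hD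
  -- the barrier `M ‖y‖^(2-n)` dominates `u` on the sphere `‖y‖ = R₁`
  have hannulus : ∀ ρ, ‖x‖ < ρ → u x + (-M) • ‖x‖ ^ (2 - (n : ℝ)) ≤ C * ρ ^ β := by
    intro ρ hρ
    have hρ₀ : 0 ≤ ρ := (hR₁.trans (hx.trans hρ)).le
    refine hg.le_of_le_on_spheres hn (hx.trans hρ)
      (fun y hy _ => ⟨hRR₁.trans_le hy, norm_pos_iff.1 (hR₁.trans_le hy)⟩)
      (fun y hy => ?_) (fun y hy => ?_) hx hρ
    · have : u y + (-M) • ‖y‖ ^ (2 - (n : ℝ)) ≤ 0 := by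
        rw [smul_eq_mul]
        linarith [hdec y hy.ge, hy ▸ hMR₁]
      exact this.trans (mul_nonneg hC (Real.rpow_nonneg hρ₀ _))
    · have huy := hdec y (hy ▸ (hx.trans hρ).le)
      rw [hy] at huy
      rw [smul_eq_mul, hy]
      nlinarith [mul_nonneg hM (Real.rpow_nonneg hρ₀ (2 - (n : ℝ)))]
  have hlim : Tendsto (fun ρ => C * ρ ^ β) atTop (𝓝 0) := by
    simpa using (tendsto_rpow_neg_atTop (neg_pos.2 hβ)).const_mul C
  have := ge_of_tendsto hlim ((eventually_gt_atTop ‖x‖).mono hannulus)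
  rw [smul_eq_mul] at this
  linarith

theorem IsHarmonicOn.norm_le_mul_norm_rpow_two_sub (hn : 0 < n)
    {f : EuclideanSpace ℝ (Fin n) → F} {R R₁ C β : ℝ} (hf : IsHarmonicOn f {y | R < ‖y‖})
    (hR₁ : 0 < R₁) (hRR₁ : R < R₁) (hC : 0 ≤ C) (hβ : β < 0)
    (hdec : ∀ y, R₁ ≤ ‖y‖ → ‖f y‖ ≤ C * ‖y‖ ^ β) {x : EuclideanSpace ℝ (Fin n)}
    (hx : R₁ < ‖x‖) : ‖f x‖ ≤ C * R₁ ^ (β - (2 - n)) * ‖x‖ ^ (2 - (n : ℝ)) := by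
  have hU : IsOpen {y : EuclideanSpace ℝ (Fin n) | R < ‖y‖} :=
    isOpen_lt continuous_const continuous_norm
  have hdual : ∀ φ : StrongDual ℝ F,
      φ (f x) ≤ C * R₁ ^ (β - (2 - n)) * ‖x‖ ^ (2 - (n : ℝ)) * ‖φ‖ := fun φ => by
    have := (hf.clm_comp hU φ).le_mul_norm_rpow_two_sub hn hR₁ hRR₁
      (mul_nonneg (norm_nonneg φ) hC) hβ (fun y hy => ?_) hx
    · linarith
    calc φ (f y) ≤ ‖φ‖ * ‖f y‖ := (Real.le_norm_self _).trans (φ.le_opNorm _)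
      _ ≤ ‖φ‖ * (C * ‖y‖ ^ β) := by gcongr; exact hdec y hy
      _ = _ := by ring
  refine NormedSpace.norm_le_dual_bound ℝ (f x) (by positivity) fun φ => ?_
  rw [Real.norm_eq_abs, abs_le]
  constructor
  · linarith [show -φ (f x) ≤ _ by simpa using hdual (-φ)]
  · exact hdual φ

end Exterior

theorem two_mul_sum_sum_mul_le {ι κ : Type*} (s : Finset ι) (t : Finset κ) (a : ι → ℝ)
    (b : κ → ℝ) (H : ι → κ → ℝ) (c : ℝ) :
    2 * c * ∑ i ∈ s, ∑ k ∈ t, a i * b k * H i k ≤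
      c ^ 2 * ∑ i ∈ s, ∑ k ∈ t, H i k ^ 2 + (∑ i ∈ s, a i ^ 2) * ∑ k ∈ t, b k ^ 2 := by
  rw [Finset.sum_mul_sum, Finset.mul_sum, Finset.mul_sum, ← Finset.sum_add_distrib]
  refine Finset.sum_le_sum fun i _ => ?_
  rw [Finset.mul_sum, Finset.mul_sum, ← Finset.sum_add_distrib]
  refine Finset.sum_le_sum fun k _ => ?_
  nlinarith [sq_nonneg (c * H i k - a i * b k)]

theorem bernstein_expr_nonneg {ι : Type*} [Fintype ι] (d g : ι → ℝ) (H : ι → ι → ℝ)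
    {m q ρ : ℝ} (hm : 0 ≤ m) (hq : ∑ i, d i ^ 2 = q) (hqρ : q ≤ ρ ^ 2) :
    0 ≤ (ρ ^ 2 - q) ^ 2 * (2 * ∑ k, ∑ i, H i k * H i k) +
      2 * ∑ i, 2 * (-2 * (ρ ^ 2 - q)) * d i * (2 * ∑ k, g k * H i k) +
      (∑ k, g k * g k) * (2 * m * (-2 * (ρ ^ 2 - q)) + 4 * q * 2) +
      (2 * m + 12) * ρ ^ 2 * (2 * ∑ k, g k * g k) := by
  have hcross : ∑ i, 2 * (-2 * (ρ ^ 2 - q)) * d i * (2 * ∑ k, g k * H i k) =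
      -(2 * (ρ ^ 2 - q) * ∑ i, ∑ k, 4 * d i * g k * H i k) := by
    simp only [Finset.mul_sum, ← Finset.sum_neg_distrib]
    exact Finset.sum_congr rfl fun i _ => Finset.sum_congr rfl fun k _ => by ring
  have hamgm := two_mul_sum_sum_mul_le Finset.univ Finset.univ (fun i => 4 * d i) g H (ρ ^ 2 - q)
  have hH : ∑ i, ∑ k, H i k ^ 2 = ∑ k, ∑ i, H i k * H i k := by
    rw [Finset.sum_comm]
    simp only [sq]
  have hd : ∑ i, (4 * d i) ^ 2 = 16 * q := by
    simp only [mul_pow, ← Finset.mul_sum, hq]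
    norm_num
  have hg : ∑ k, g k ^ 2 = ∑ k, g k * g k := by simp only [sq]
  rw [hH, hd, hg] at hamgm
  rw [hcross]
  have hW : 0 ≤ ∑ k, g k * g k := Finset.sum_nonneg fun k _ => mul_self_nonneg _
  have h₁ : 0 ≤ (∑ k, g k * g k) * (ρ ^ 2 - q) := mul_nonneg hW (sub_nonneg.2 hqρ)
  have h₂ : 0 ≤ m * (∑ k, g k * g k) * q :=
    mul_nonneg (mul_nonneg hm hW) (hq ▸ Finset.sum_nonneg fun i _ => sq_nonneg _)
  -- after AM-GM only `(4m (ρ² - q) + 24 q) ∑ gₖ²` is left, and `(2m + 12) ρ²` absorbs it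
  linear_combination 2 * hamgm + 24 * h₁ + 4 * h₂

theorem norm_sq_eq_sum_sq_apply_single {ι : Type*} [Fintype ι] [DecidableEq ι]
    (T : StrongDual ℝ (EuclideanSpace ℝ ι)) :
    ‖T‖ ^ 2 = ∑ i, T (EuclideanSpace.single i 1) ^ 2 := by
  rw [← (toDual ℝ _).symm.norm_map T, EuclideanSpace.real_norm_sq_eq]
  refine Finset.sum_congr rfl fun i _ => ?_
  rw [← toDual_symm_apply, EuclideanSpace.inner_single_right]
  simp

section GradientEstimate

variable {n : ℕ} {u : EuclideanSpace ℝ (Fin n) → ℝ} {V : Set (EuclideanSpace ℝ (Fin n))}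
  {y : EuclideanSpace ℝ (Fin n)}

theorem IsHarmonicOn.vecLaplacian_mul_self (hu : IsHarmonicOn u V) (hV : IsOpen V)
    (hy : y ∈ V) : vecLaplacian (fun y => u y * u y) y = 2 * ∑ i, ∂[i] u y * ∂[i] u y := by
  rw [vecLaplacian_mul hu.1 hu.1 hV hy, hu.2 y hy]
  ring

theorem IsHarmonicOn.vecLaplacian_sum_partialDeriv_mul_self (hu : IsHarmonicOn u V)
    (hV : IsOpen V) (hy : y ∈ V) :
    vecLaplacian (fun y => ∑ k, ∂[k] u y * ∂[k] u y) y =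
      2 * ∑ k, ∑ i, ∂[i] (∂[k] u) y * ∂[i] (∂[k] u) y := by
  rw [vecLaplacian_sum (fun k _ => (hu.partialDeriv hV _).1.mul (hu.partialDeriv hV _).1) hV hy,
    Finset.mul_sum]
  exact Finset.sum_congr rfl fun k _ => (hu.partialDeriv hV _).vecLaplacian_mul_self hV hy

theorem IsHarmonicOn.vecLaplacian_bernstein_nonneg (hu : IsHarmonicOn u V) (hV : IsOpen V)
    {z : EuclideanSpace ℝ (Fin n)} {ρ : ℝ} (hyV : y ∈ V) (hy : y ∈ ball z ρ) :
    0 ≤ vecLaplacian (fun y => (ρ ^ 2 - ‖y - z‖ ^ 2) ^ 2 * ∑ k, ∂[k] u y * ∂[k] u y +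
      ((2 * n + 12) * ρ ^ 2) • (u y * u y)) y := by
  have hu' := fun k => hu.partialDeriv hV (EuclideanSpace.single k 1)
  have hη : ContDiff ℝ (⊤ : ℕ∞) fun y : EuclideanSpace ℝ (Fin n) => (ρ ^ 2 - ‖y - z‖ ^ 2) ^ 2 :=
    (contDiff_const.sub ((contDiff_id.sub contDiff_const).norm_sq ℝ)).pow 2
  have hw : ContDiffOn ℝ (⊤ : ℕ∞) (fun y => ∑ k, ∂[k] u y * ∂[k] u y) V :=
    ContDiffOn.sum fun k _ => (hu' k).1.mul (hu' k).1
  have hηderiv : ∀ t, HasDerivAt (fun t => (ρ ^ 2 - t) ^ 2) (-2 * (ρ ^ 2 - t)) t := fun t =>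
    (((hasDerivAt_id' t).const_sub (ρ ^ 2)).fun_pow 2).congr_deriv (by push_cast; ring)
  have hΔη := vecLaplacian_comp_norm_sub_sq (x := y) (z := z) (h := fun t => (ρ ^ 2 - t) ^ 2)
    (Eventually.of_forall hηderiv)
    ((((hasDerivAt_id' _).const_sub (ρ ^ 2)).const_mul (-2)).congr_deriv (by ring : _ = (2 : ℝ)))
  have hdη : ∀ i, ∂[i] (fun y => (ρ ^ 2 - ‖y - z‖ ^ 2) ^ 2) y =
      2 * (-2 * (ρ ^ 2 - ‖y - z‖ ^ 2)) * (y - z) i := fun i => by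
    rw [partialDeriv_comp_norm_sub_sq (hηderiv _)]
    simp [EuclideanSpace.inner_single_right]
  have hdw : ∀ i, ∂[i] (fun y => ∑ k, ∂[k] u y * ∂[k] u y) y =
      2 * ∑ k, ∂[k] u y * ∂[i] (∂[k] u) y := fun i =>
    partialDeriv_sum_mul_self (fun k _ => (hu' k).1.differentiableAt_of_isOpen hV hyV) _
  rw [vecLaplacian_add (hη.contDiffOn.mul hw) ((hu.1.mul hu.1).const_smul _) hV hyV,
    vecLaplacian_mul hη.contDiffOn hw hV hyV, vecLaplacian_const_smul _ (hu.1.mul hu.1) hV hyV,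
    hu.vecLaplacian_mul_self hV hyV, hu.vecLaplacian_sum_partialDeriv_mul_self hV hyV, hΔη]
  have hqρ : ‖y - z‖ ^ 2 ≤ ρ ^ 2 :=
    pow_le_pow_left₀ (norm_nonneg _) (by simpa [dist_eq_norm] using hy.le) 2
  simp only [hdη, hdw, smul_eq_mul]
  exact bernstein_expr_nonneg _ _ _ (Nat.cast_nonneg n) (EuclideanSpace.real_norm_sq_eq _).symm hqρ

theorem IsHarmonicOn.norm_fderiv_le_of_abs_le (hn : 0 < n) (hu : IsHarmonicOn u V)
    (hV : IsOpen V) {z : EuclideanSpace ℝ (Fin n)} {ρ : ℝ} (hρ : 0 < ρ)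
    (hball : closedBall z ρ ⊆ V) {A : ℝ} (hA : ∀ y ∈ closedBall z ρ, |u y| ≤ A) :
    ‖fderiv ℝ u z‖ ≤ (2 * n + 12) * A / ρ := by
  set c := (2 * n + 12) * ρ ^ 2
  have hA0 : 0 ≤ A := (abs_nonneg _).trans (hA z (mem_closedBall_self hρ.le))
  have hG : ContDiffOn ℝ (⊤ : ℕ∞)
      (fun y => (ρ ^ 2 - ‖y - z‖ ^ 2) ^ 2 * ∑ k, ∂[k] u y * ∂[k] u y + c • (u y * u y)) V :=
    (((contDiff_const.sub ((contDiff_id.sub contDiff_const).norm_sq ℝ)).pow 2).contDiffOn.mul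
      (ContDiffOn.sum fun k _ => (hu.partialDeriv hV _).1.mul (hu.partialDeriv hV _).1)).add
      ((hu.1.mul hu.1).const_smul c)
  have hcenter := le_of_forall_mem_frontier_le_of_vecLaplacian_nonneg hn isOpen_ball
    isBounded_ball (hG.continuousOn.mono (closure_ball z hρ.ne' ▸ hball))
    (hG.mono (ball_subset_closedBall.trans hball))
    (fun y hy => hu.vecLaplacian_bernstein_nonneg hV (hball (ball_subset_closedBall hy)) hy)
    (M := c * A ^ 2) (fun y hy => ?_) (subset_closure (mem_ball_self hρ))
  · have hsum : ∑ i, ∂[i] u z * ∂[i] u z ≤ (2 * n + 12) * A ^ 2 / ρ ^ 2 := by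
      rw [le_div_iff₀ (by positivity)]
      norm_num [c] at hcenter
      refine le_of_mul_le_mul_left ?_ (pow_pos hρ 2)
      nlinarith [mul_nonneg (by positivity : (0 : ℝ) ≤ (2 * n + 12) * ρ ^ 2)
        (mul_self_nonneg (u z))]
    have hsq : ‖fderiv ℝ u z‖ ^ 2 ≤ ((2 * n + 12) * A / ρ) ^ 2 := by
      rw [norm_sq_eq_sum_sq_apply_single]
      simp only [sq] at hsum ⊢
      refine hsum.trans ?_
      rw [div_mul_div_comm, div_le_div_iff_of_pos_right (by positivity)]
      nlinarith [mul_nonneg (Nat.cast_nonneg (α := ℝ) n) (mul_self_nonneg A)]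
    exact (pow_le_pow_iff_left₀ (norm_nonneg _) (by positivity) two_ne_zero).1 hsq
  · rw [frontier_ball z hρ.ne'] at hy
    have hη : ρ ^ 2 - ‖y - z‖ ^ 2 = 0 := by rw [← dist_eq_norm, mem_sphere.1 hy, sub_self]
    have hu2 : u y * u y ≤ A ^ 2 := by
      rw [← sq, ← sq_abs]
      exact pow_le_pow_left₀ (abs_nonneg _) (hA y (sphere_subset_closedBall hy)) 2
    simp only [hη, smul_eq_mul]
    nlinarith [mul_le_mul_of_nonneg_left hu2 (by positivity : (0 : ℝ) ≤ c)]

end GradientEstimate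

section Decay

variable {n : ℕ} {F : Type*} [NormedAddCommGroup F] [NormedSpace ℝ F]

theorem IsHarmonicOn.norm_fderiv_le (hn : 0 < n) {f : EuclideanSpace ℝ (Fin n) → F}
    {V : Set (EuclideanSpace ℝ (Fin n))} (hf : IsHarmonicOn f V) (hV : IsOpen V)
    {z : EuclideanSpace ℝ (Fin n)} {ρ : ℝ} (hρ : 0 < ρ) (hball : closedBall z ρ ⊆ V) {A : ℝ}
    (hA : ∀ y ∈ closedBall z ρ, ‖f y‖ ≤ A) : ‖fderiv ℝ f z‖ ≤ (2 * n + 12) * A / ρ := by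
  have hA0 : 0 ≤ A := (norm_nonneg _).trans (hA z (mem_closedBall_self hρ.le))
  have hK : 0 ≤ (2 * n + 12) * A / ρ := div_nonneg (by positivity) hρ.le
  refine ContinuousLinearMap.opNorm_le_bound _ hK fun v =>
    NormedSpace.norm_le_dual_bound ℝ _ (mul_nonneg hK (norm_nonneg v)) fun φ => ?_
  have hfz := hf.1.differentiableAt_of_isOpen hV (hball (mem_closedBall_self hρ.le))
  have hφ : fderiv ℝ (fun y => φ (f y)) z = φ.comp (fderiv ℝ f z) :=
    (φ.hasFDerivAt.comp z hfz.hasFDerivAt).fderiv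
  have hgrad := (hf.clm_comp hV φ).norm_fderiv_le_of_abs_le hn hV hρ hball (A := ‖φ‖ * A)
    fun y hy => by
      rw [← Real.norm_eq_abs]
      exact (φ.le_opNorm _).trans (by gcongr; exact hA y hy)
  calc ‖φ (fderiv ℝ f z v)‖ = ‖fderiv ℝ (fun y => φ (f y)) z v‖ := by rw [hφ]; rfl
    _ ≤ ‖fderiv ℝ (fun y => φ (f y)) z‖ * ‖v‖ := ContinuousLinearMap.le_opNorm _ _
    _ ≤ (2 * n + 12) * (‖φ‖ * A) / ρ * ‖v‖ := by gcongr
    _ = (2 * n + 12) * A / ρ * ‖v‖ * ‖φ‖ := by ring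

theorem IsHarmonicOn.norm_fderiv_le_mul_rpow (hn : 0 < n) {f : EuclideanSpace ℝ (Fin n) → F}
    {R C α : ℝ} (hf : IsHarmonicOn f {y | R < ‖y‖}) (hR : 0 ≤ R) (hC : 0 ≤ C) (hα : α ≤ 0)
    (hdec : ∀ y, R < ‖y‖ → ‖f y‖ ≤ C * ‖y‖ ^ α) {x : EuclideanSpace ℝ (Fin n)}
    (hx : 2 * R < ‖x‖) :
    ‖fderiv ℝ f x‖ ≤ (2 * n + 12) * 2 ^ (1 - α) * C * ‖x‖ ^ (α - 1) := by
  have hx₀ : 0 < ‖x‖ := by linarith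
  have hρ : 0 < ‖x‖ / 2 := by positivity
  have hfar : ∀ y ∈ closedBall x (‖x‖ / 2), ‖x‖ / 2 ≤ ‖y‖ := fun y hy => by
    have := norm_sub_norm_le x y
    rw [mem_closedBall, dist_eq_norm, ← norm_neg, neg_sub] at hy
    linarith
  have hball : closedBall x (‖x‖ / 2) ⊆ {y | R < ‖y‖} := fun y hy =>
    show R < ‖y‖ by linarith [hfar y hy]
  have hgrad := hf.norm_fderiv_le hn (isOpen_lt continuous_const continuous_norm) hρ hball
    (A := C * (‖x‖ / 2) ^ α) fun y hy => (hdec y (hball hy)).trans <|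
      mul_le_mul_of_nonneg_left (Real.rpow_le_rpow_of_nonpos hρ (hfar y hy) hα) hC
  calc ‖fderiv ℝ f x‖ ≤ (2 * n + 12) * (C * (‖x‖ / 2) ^ α) / (‖x‖ / 2) := hgrad
    _ = (2 * n + 12) * C * (‖x‖ / 2) ^ (α - 1) := by
      rw [Real.rpow_sub_one hρ.ne']
      ring
    _ = (2 * n + 12) * 2 ^ (1 - α) * C * ‖x‖ ^ (α - 1) := by
      rw [Real.div_rpow hx₀.le zero_le_two, show (1 : ℝ) - α = -(α - 1) by ring,
        Real.rpow_neg zero_le_two]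
      field_simp

theorem BigOInfty.mono {f : EuclideanSpace ℝ (Fin n) → F} {R R' α : ℝ}
    (hf : BigOInfty f R' α) (hR : R ≤ R') : BigOInfty f R α := fun j =>
  let ⟨C, hC, R₀, hR₀, hbound⟩ := hf j
  ⟨C, hC, R₀, hR.trans hR₀, hbound⟩

theorem IsHarmonicOn.bigOInfty_of_norm_le (hn : 0 < n) {f : EuclideanSpace ℝ (Fin n) → F}
    {R C α : ℝ} (hf : IsHarmonicOn f {y | R < ‖y‖}) (hR : 0 ≤ R) (hC : 0 ≤ C) (hα : α ≤ 0)
    (hdec : ∀ y, R < ‖y‖ → ‖f y‖ ≤ C * ‖y‖ ^ α) : BigOInfty f R α := by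
  intro j
  induction j generalizing F R C α with
  | zero =>
    refine ⟨C + 1, by positivity, R + 1, by linarith, fun x hx => ?_⟩
    rw [norm_iteratedFDeriv_zero, CharP.cast_eq_zero, sub_zero]
    exact (hdec x (by linarith)).trans
      (mul_le_mul_of_nonneg_right (by linarith) (Real.rpow_nonneg (norm_nonneg x) α))
  | succ j ih =>
    have hsub : {y : EuclideanSpace ℝ (Fin n) | 2 * R < ‖y‖} ⊆ {y | R < ‖y‖} := fun y hy =>
      show R < ‖y‖ by linarith [show 2 * R < ‖y‖ from hy]
    obtain ⟨C', hC', R₀, hR₀, hbound⟩ :=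
      ih ((hf.fderiv_of_isOpen (isOpen_lt continuous_const continuous_norm)).mono hsub)
        (by positivity) (by positivity) (by linarith)
        fun y hy => hf.norm_fderiv_le_mul_rpow hn hR hC hα hdec hy
    refine ⟨C', hC', R₀, by linarith, fun x hx => ?_⟩
    rw [← norm_iteratedFDeriv_fderiv]
    convert hbound x hx using 3
    push_cast
    ring

end Decay

theorem decaying_harmonic_map_decays_two_sub_n_general (n : ℕ) (hn : 3 ≤ n)
    (R : ℝ) (δ : ℝ) (hδ : δ < 0)
    (E : Type*) [NormedAddCommGroup E] [NormedSpace ℝ E]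
    (ω : EuclideanSpace ℝ (Fin n) → E)
    (hharm : IsHarmonicOn ω {x | R < ‖x‖})
    (hO : BigOInfty ω R δ) :
    BigOInfty ω R (2 - (n : ℝ)) := by
  obtain ⟨C, hC, R₀, hR₀, hω⟩ := hO 0
  set R₁ := max R₀ 0 + 1
  have hR₁ : 0 < R₁ := by positivity
  have hRR₁ : R < R₁ := by linarith [le_max_left R₀ 0]
  have hn₀ : 0 < n := by omega
  have hdecay : ∀ y, R₁ ≤ ‖y‖ → ‖ω y‖ ≤ C * ‖y‖ ^ δ := fun y hy => by
    simpa using hω y (by linarith [le_max_left R₀ 0])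
  have hfar : ∀ x, R₁ < ‖x‖ → ‖ω x‖ ≤ C * R₁ ^ (δ - (2 - n)) * ‖x‖ ^ (2 - (n : ℝ)) :=
    fun x hx => hharm.norm_le_mul_norm_rpow_two_sub hn₀ hR₁ hRR₁ hC.le hδ hdecay hx
  have hsub : {x : EuclideanSpace ℝ (Fin n) | R₁ < ‖x‖} ⊆ {x | R < ‖x‖} := fun x hx =>
    show R < ‖x‖ from hRR₁.trans hx
  have hn₂ : 2 - (n : ℝ) ≤ 0 := by
    have : (3 : ℝ) ≤ n := by exact_mod_cast hn
    linarith
  exact ((hharm.mono hsub).bigOInfty_of_norm_le hn₀ hR₁.le (by positivity) hn₂ hfar).mono hRR₁.le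

/-- Let `n ≥ 3`, `R > 0`, `δ < 0`, let `E` be a finite-dimensional real normed vector
space, and let `ω : {x ∈ ℝⁿ : |x| > R} → E` be a smooth, componentwise harmonic map with
`ω = 𝒪_∞(r^δ)`. Then `ω = 𝒪_∞(r^{2−n})`. -/
theorem decaying_harmonic_map_decays_two_sub_n (n : ℕ) (hn : 3 ≤ n)
    (R : ℝ) (hR : 0 < R) (δ : ℝ) (hδ : δ < 0)
    (E : Type*) [NormedAddCommGroup E] [NormedSpace ℝ E] [FiniteDimensional ℝ E]
    (ω : EuclideanSpace ℝ (Fin n) → E)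
    (hharm : IsHarmonicOn ω {x | R < ‖x‖})
    (hO : BigOInfty ω R δ) :
    BigOInfty ω R (2 - (n : ℝ)) :=
  decaying_harmonic_map_decays_two_sub_n_general n hn R δ hδ E ω hharm hO
end
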